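/- arXiv:1601.02248 — 3 statements merged into one kernel-verified Lean document; each statement's English description precedes it below -/
import Mathlib

section
/- Let A = (A_1,...,A_q) be a family of endomorphisms of an n-dimensional vector space with symmetric functions σ_u, and let T_u be defined recursively by T_0 = I and T_u = σ_u I − Σ_α A_α T_{α♭(u)} (sum over α with u_α ≥ 1). Then T_u also satisfies T_u = σ_u I − Σ_α T_{α♭(u)} A_α; i.e., the left and right recursions agree. -/
open MvPolynomial Matrix

/-- The generalized symmetric function `σ_u(A)`: the coefficient of `t^u` in
`det(I + t₁A₁ + ⋯ + t_qA_q)`. -/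
noncomputable def gsigma {n q : ℕ} (A : Fin q → Matrix (Fin n) (Fin n) ℝ)
    (u : Fin q → ℕ) : ℝ :=
  MvPolynomial.coeff (Finsupp.equivFunOnFinite.symm u)
    ((1 + ∑ α, (MvPolynomial.X α : MvPolynomial (Fin q) ℝ) • (A α).map MvPolynomial.C).det)

/-- Auxiliary recursion (on `|u|`) for the generalized Newton transformation. -/
noncomputable def newtonAux {n q : ℕ} (A : Fin q → Matrix (Fin n) (Fin n) ℝ) :
    ℕ → (Fin q → ℕ) → Matrix (Fin n) (Fin n) ℝ
  | 0, _ => 1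
  | k + 1, u =>
      gsigma A u • (1 : Matrix (Fin n) (Fin n) ℝ) -
        ∑ α, if 1 ≤ u α then A α * newtonAux A k (Function.update u α (u α - 1)) else 0

/-- The generalized Newton transformation `T_u`, defined by `T_0 = I` and
`T_u = σ_u I - ∑_α A_α T_{α♭(u)}`. -/
noncomputable def newton {n q : ℕ} (A : Fin q → Matrix (Fin n) (Fin n) ℝ)
    (u : Fin q → ℕ) : Matrix (Fin n) (Fin n) ℝ :=
  newtonAux A (∑ i, u i) u


lemma one_le_sum' {q : ℕ} (u : Fin q → ℕ) (hu : u ≠ fun _ => 0) : 1 ≤ ∑ i, u i := by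
  by_contra h
  push_neg at h
  apply hu
  funext i
  exact Finset.sum_eq_zero_iff.mp (by omega : ∑ i, u i = 0) i (Finset.mem_univ i)

lemma sum_dec' {q : ℕ} (u : Fin q → ℕ) (α : Fin q) (h : 1 ≤ u α) :
    ∑ i, Function.update u α (u α - 1) i = (∑ i, u i) - 1 := by
  rw [Finset.sum_update_of_mem (Finset.mem_univ α)]
  have h2 : ∑ i, u i = u α + ∑ i ∈ Finset.univ \ {α}, u i := by
    rw [Finset.sdiff_singleton_eq_erase, Finset.add_sum_erase _ _ (Finset.mem_univ α)]
  omega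

lemma newton_unfold {n q : ℕ} (A : Fin q → Matrix (Fin n) (Fin n) ℝ)
    (u : Fin q → ℕ) (hu : u ≠ fun _ => 0) :
    newton A u = gsigma A u • (1 : Matrix (Fin n) (Fin n) ℝ) -
      ∑ α, if 1 ≤ u α then A α * newton A (Function.update u α (u α - 1)) else 0 := by
  have h1 := one_le_sum' u hu
  obtain ⟨k, hk⟩ : ∃ k, ∑ i, u i = k + 1 := ⟨∑ i, u i - 1, by omega⟩
  unfold newton
  rw [hk, newtonAux]
  congr 1
  apply Finset.sum_congr rfl
  intro α _
  split_ifs with h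
  · congr 1
    rw [sum_dec' u α h, hk]
    rfl
  · rfl

lemma cond_symm' {q : ℕ} (u : Fin q → ℕ) (α β : Fin q) :
    (1 ≤ u α ∧ 1 ≤ Function.update u α (u α - 1) β) ↔
    (1 ≤ u β ∧ 1 ≤ Function.update u β (u β - 1) α) := by
  rcases eq_or_ne α β with rfl | hab
  · rfl
  · rw [Function.update_of_ne hab.symm, Function.update_of_ne hab]
    exact and_comm

lemma idx_symm' {q : ℕ} (u : Fin q → ℕ) (α β : Fin q) :
    Function.update (Function.update u α (u α - 1)) β
      (Function.update u α (u α - 1) β - 1) =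
    Function.update (Function.update u β (u β - 1)) α
      (Function.update u β (u β - 1) α - 1) := by
  rcases eq_or_ne α β with rfl | hab
  · rfl
  · rw [Function.update_of_ne hab.symm, Function.update_of_ne hab,
      Function.update_comm hab]

noncomputable def ggL {n q : ℕ} (A : Fin q → Matrix (Fin n) (Fin n) ℝ)
    (u : Fin q → ℕ) (α β : Fin q) : Matrix (Fin n) (Fin n) ℝ :=
  if 1 ≤ u α then
    (if 1 ≤ Function.update u α (u α - 1) β then
      (A β * newton A (Function.update (Function.update u α (u α - 1)) β
        (Function.update u α (u α - 1) β - 1))) * A α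
    else 0)
  else 0

noncomputable def ggR {n q : ℕ} (A : Fin q → Matrix (Fin n) (Fin n) ℝ)
    (u : Fin q → ℕ) (α β : Fin q) : Matrix (Fin n) (Fin n) ℝ :=
  if 1 ≤ u α then
    (if 1 ≤ Function.update u α (u α - 1) β then
      A α * (newton A (Function.update (Function.update u α (u α - 1)) β
        (Function.update u α (u α - 1) β - 1)) * A β)
    else 0)
  else 0

lemma ggR_eq_ggL_swap {n q : ℕ} (A : Fin q → Matrix (Fin n) (Fin n) ℝ)
    (u : Fin q → ℕ) (α β : Fin q) : ggR A u α β = ggL A u β α := by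
  unfold ggR ggL
  simp only [← ite_and]
  rw [idx_symm' u α β]
  exact if_congr (cond_symm' u α β) (mul_assoc _ _ _).symm rfl
theorem newton_right_recursion {n q : ℕ} (A : Fin q → Matrix (Fin n) (Fin n) ℝ)
    (u : Fin q → ℕ) (hu : u ≠ fun _ => 0) :
    newton A u =
      gsigma A u • (1 : Matrix (Fin n) (Fin n) ℝ) -
        ∑ α, if 1 ≤ u α then newton A (Function.update u α (u α - 1)) * A α else 0 := by
  suffices H : ∀ N (u : Fin q → ℕ), ∑ i, u i = N → u ≠ (fun _ => 0) →
      newton A u = gsigma A u • (1 : Matrix (Fin n) (Fin n) ℝ) -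
        ∑ α, if 1 ≤ u α then newton A (Function.update u α (u α - 1)) * A α else 0 by
    exact H _ u rfl hu
  intro N
  induction N using Nat.strong_induction_on with
  | _ N ih =>
    intro u hN hu
    rw [newton_unfold A u hu]
    congr 1
    rw [← sub_eq_zero, ← Finset.sum_sub_distrib]
    have key : ∀ α : Fin q,
        ((if 1 ≤ u α then A α * newton A (Function.update u α (u α - 1)) else 0) -
         (if 1 ≤ u α then newton A (Function.update u α (u α - 1)) * A α else 0)) =
        ∑ β, (ggL A u α β - ggR A u α β) := by
      intro α
      by_cases h1 : 1 ≤ u α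
      · by_cases hv0 : Function.update u α (u α - 1) = fun _ => 0
        · have hT : newton A (Function.update u α (u α - 1)) = 1 := by
            unfold newton
            have h0 : ∑ i, Function.update u α (u α - 1) i = 0 := by rw [hv0]; simp
            rw [h0]; rfl
          rw [if_pos h1, if_pos h1, hT, mul_one, one_mul, sub_self]
          symm
          apply Finset.sum_eq_zero
          intro β _
          have hb : ¬ 1 ≤ Function.update u α (u α - 1) β := by rw [hv0]; simp
          unfold ggL ggR
          rw [if_pos h1, if_pos h1, if_neg hb, if_neg hb, sub_self]
        · have hvsum : ∑ i, Function.update u α (u α - 1) i = N - 1 := by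
            rw [sum_dec' u α h1, hN]
          have hN1 : 1 ≤ N := hN ▸ one_le_sum' u hu
          have right := ih (N - 1) (by omega) (Function.update u α (u α - 1)) hvsum hv0
          have left := newton_unfold A (Function.update u α (u α - 1)) hv0
          rw [if_pos h1, if_pos h1]
          nth_rewrite 1 [right]
          nth_rewrite 1 [left]
          rw [mul_sub, sub_mul, mul_smul_comm, smul_mul_assoc, mul_one, one_mul,
            Finset.mul_sum, Finset.sum_mul, sub_sub_sub_cancel_left,
            Finset.sum_sub_distrib]
          congr 1
          · apply Finset.sum_congr rfl
            intro β _
            unfold ggL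
            rw [if_pos h1, ite_mul, zero_mul]
          · apply Finset.sum_congr rfl
            intro β _
            unfold ggR
            rw [if_pos h1, mul_ite, mul_zero]
      · rw [if_neg h1, if_neg h1, sub_self]
        symm
        apply Finset.sum_eq_zero
        intro β _
        unfold ggL ggR
        rw [if_neg h1, if_neg h1, sub_self]
    calc ∑ α, ((if 1 ≤ u α then A α * newton A (Function.update u α (u α - 1)) else 0) -
         (if 1 ≤ u α then newton A (Function.update u α (u α - 1)) * A α else 0))
        = ∑ α, ∑ β, (ggL A u α β - ggR A u α β) :=
          Finset.sum_congr rfl (fun α _ => key α)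
      _ = (∑ α, ∑ β, ggL A u α β) - ∑ α, ∑ β, ggR A u α β := by
          simp [Finset.sum_sub_distrib]
      _ = 0 := by
          have : ∑ α, ∑ β, ggR A u α β = ∑ α, ∑ β, ggL A u α β := by
            rw [Finset.sum_comm]
            exact Finset.sum_congr rfl fun β _ =>
              Finset.sum_congr rfl fun α _ => ggR_eq_ggL_swap A u α β
          rw [this, sub_self]
end

section
/- Let A = (A_1,...,A_q) be a family of endomorphisms of an n-dimensional vector space, σ_u the symmetric functions from det(I + Σ t_α A_α), and T_u the generalized Newton transformation defined by T_0 = I, T_u = σ_u I − Σ_α A_α T_{α♭(u)}. Then for every multi-index u, |u| σ_u = Σ_α tr(A_α T_{α♭(u)}). -/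
open MvPolynomial Matrix

open Finset

/-!
Write `M(t) = I + ∑ t_α A_α` over `ℝ[t_1, …, t_q]`, so that `σ_u` is the `t^u`-coefficient of
`det M(t)`. Comparing `t^u`-coefficients in `M(t) · adj M(t) = det M(t) · I` shows that the
coefficients of `adj M(t)` satisfy the recursion defining the Newton transformations, so `T_u`
is the `t^u`-coefficient of `adj M(t)`. By Jacobi's formula `∂_α det M(t) = tr (adj M(t) · A_α)`;
the `t^u`-coefficient of `t_α ∂_α det M(t)` is `u_α σ_u`, that of `t_α tr (adj M(t) · A_α)` is
`tr (A_α T_{α♭(u)})`, and summing over `α` gives the theorem.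
-/

theorem Derivation.leibniz_prod {R A M : Type*} [CommSemiring R] [CommSemiring A]
    [AddCommMonoid M] [Algebra R A] [Module A M] [Module R M] [IsScalarTower R A M]
    (D : Derivation R A M) {ι : Type*} [DecidableEq ι] (s : Finset ι) (f : ι → A) :
    D (∏ i ∈ s, f i) = ∑ i ∈ s, (∏ j ∈ s.erase i, f j) • D (f i) := by
  induction s using Finset.induction_on with
  | empty => simp
  | insert a s ha ih =>
    rw [prod_insert ha, leibniz, ih, sum_insert ha, erase_insert ha, smul_sum, add_comm]
    congr 1
    refine sum_congr rfl fun i hi => ?_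
    rw [erase_insert_of_ne (ne_of_mem_of_not_mem hi ha).symm,
      prod_insert fun h => ha (mem_of_mem_erase h), mul_smul]

theorem Derivation.map_det {R A : Type*} [CommRing R] [CommRing A] [Algebra R A]
    {n : Type*} [Fintype n] [DecidableEq n] (D : Derivation R A A) (M : Matrix n n A) :
    D M.det = (M.adjugate * M.map D).trace := by
  have hcol (j : n) : (M.adjugate * M.map D) j j = (M.updateCol j fun i => D (M i j)).det := by
    rw [← cramer_apply, cramer_eq_adjugate_mulVec]; rfl
  have hprod (σ : Equiv.Perm n) (j : n) : ∏ i, M.updateCol j (fun i => D (M i j)) (σ i) i =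
      (∏ i ∈ univ.erase j, M (σ i) i) • D (M (σ j) j) := by
    rw [← mul_prod_erase univ _ (mem_univ j), smul_eq_mul, mul_comm, updateCol_self]
    congr 1
    exact prod_congr rfl fun i hi => updateCol_ne (ne_of_mem_erase hi)
  simp only [trace, Matrix.diag, hcol, det_apply, hprod]
  rw [sum_comm, map_sum]
  refine sum_congr rfl fun σ _ => ?_
  rw [Units.smul_def, map_zsmul, leibniz_prod, smul_sum]
  rfl

namespace MvPolynomial

theorem coeff_X_mul_pderiv {R σ : Type*} [CommSemiring R] (i : σ) (v : σ →₀ ℕ)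
    (p : MvPolynomial σ R) : coeff v (X i * pderiv i p) = v i * coeff v p := by
  classical
  induction p using MvPolynomial.induction_on' with
  | monomial m r =>
    rw [X_mul_pderiv_monomial, coeff_smul, coeff_monomial]
    split_ifs with h
    · rw [h, nsmul_eq_mul]
    · simp
  | add p r hp hr => rw [map_add, mul_add, coeff_add, hp, hr, coeff_add, mul_add]

section

variable {σ n R : Type*} [CommSemiring R] (v : σ →₀ ℕ)

theorem coeff_trace [Fintype n] (P : Matrix n n (MvPolynomial σ R)) :
    coeff v P.trace = (P.map (coeff v)).trace :=
  coeff_sum _ _ _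

theorem map_coeff_map_C_mul [Fintype n] (B : Matrix n n R)
    (N : Matrix n n (MvPolynomial σ R)) :
    (B.map C * N).map (coeff v) = B * N.map (coeff v) := by
  ext i j
  simp [mul_apply, coeff_sum, coeff_C_mul]

theorem map_coeff_mul_map_C [Fintype n] (N : Matrix n n (MvPolynomial σ R))
    (B : Matrix n n R) :
    (N * B.map C).map (coeff v) = N.map (coeff v) * B := by
  ext i j
  simp [mul_apply, coeff_sum, mul_comm _ (C _), coeff_C_mul, mul_comm (B _ _)]

theorem map_coeff_smul_one [DecidableEq n] (p : MvPolynomial σ R) :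
    (p • (1 : Matrix n n (MvPolynomial σ R))).map (coeff v) = coeff v p • 1 := by
  ext i j
  by_cases h : i = j <;> simp [h]

theorem map_coeff_X_smul (α : σ) (N : Matrix n n (MvPolynomial σ R)) :
    ((X α : MvPolynomial σ R) • N).map (coeff v) =
      if 1 ≤ v α then N.map (coeff (v - Finsupp.single α 1)) else 0 := by
  classical
  ext i j
  simp only [map_apply, Matrix.smul_apply, smul_eq_mul, coeff_X_mul', Finsupp.mem_support_iff,
    Nat.one_le_iff_ne_zero]
  split_ifs <;> simp [*]

end

end MvPolynomial

section OneAddPencil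

variable {σ n R : Type*} [CommRing R] [Fintype σ] [DecidableEq n]

noncomputable def oneAddPencil (A : σ → Matrix n n R) : Matrix n n (MvPolynomial σ R) :=
  1 + ∑ α, (X α : MvPolynomial σ R) • (A α).map C

variable (A : σ → Matrix n n R)

theorem oneAddPencil_map_pderiv (α : σ) : (oneAddPencil A).map (pderiv α) = (A α).map C := by
  classical
  ext i j : 1
  simp [oneAddPencil, Matrix.one_apply, Matrix.sum_apply, apply_ite, pderiv_X, Pi.single_apply]

theorem oneAddPencil_map_constantCoeff : (oneAddPencil A).map constantCoeff = 1 := by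
  ext i j : 1
  simp [oneAddPencil, Matrix.one_apply, Matrix.sum_apply]

variable [Fintype n]

theorem adjugate_oneAddPencil_map_coeff_zero : (oneAddPencil A).adjugate.map (coeff 0) = 1 := by
  rw [← constantCoeff_eq, ← RingHom.mapMatrix_apply, RingHom.map_adjugate,
    RingHom.mapMatrix_apply, oneAddPencil_map_constantCoeff, adjugate_one]

theorem adjugate_oneAddPencil_map_coeff (v : σ →₀ ℕ) :
    (oneAddPencil A).adjugate.map (coeff v) = coeff v (oneAddPencil A).det • 1 -
      ∑ α, if 1 ≤ v α then
        A α * (oneAddPencil A).adjugate.map (coeff (v - Finsupp.single α 1)) else 0 := by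
  set N := (oneAddPencil A).adjugate
  set d := (oneAddPencil A).det
  have h : N + ∑ α, (X α : MvPolynomial σ R) • ((A α).map C * N) = d • 1 :=
    calc _ = (1 + ∑ α, (X α : MvPolynomial σ R) • (A α).map C) * N := by
          simp only [add_mul, one_mul, sum_mul, smul_mul]
      _ = d • 1 := mul_adjugate (oneAddPencil A)
  have h' := congrArg (coeffAddMonoidHom v).mapMatrix h
  simp only [map_add, map_sum, AddMonoidHom.mapMatrix_apply] at h'
  change N.map (coeff v) + ∑ α, ((X α : MvPolynomial σ R) • ((A α).map C * N)).map (coeff v) =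
    (d • (1 : Matrix n n _)).map (coeff v) at h'
  simp only [map_coeff_X_smul, map_coeff_map_C_mul, map_coeff_smul_one] at h'
  rw [← h', add_sub_cancel_right]

theorem natCast_mul_coeff_det_oneAddPencil (v : σ →₀ ℕ) (α : σ) :
    (v α : R) * coeff v (oneAddPencil A).det =
      if 1 ≤ v α then
        (A α * (oneAddPencil A).adjugate.map (coeff (v - Finsupp.single α 1))).trace
      else 0 := by
  rw [← coeff_X_mul_pderiv, Derivation.map_det, oneAddPencil_map_pderiv, ← smul_eq_mul,
    ← trace_smul, coeff_trace, map_coeff_X_smul]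
  split_ifs
  · rw [map_coeff_mul_map_C, trace_mul_comm]
  · exact trace_zero _ _

end OneAddPencil

theorem Finsupp.equivFunOnFinite_symm_sub_single_one {σ : Type*} [Finite σ] [DecidableEq σ]
    (u : σ → ℕ) (α : σ) :
    equivFunOnFinite.symm u - single α 1 =
      equivFunOnFinite.symm (Function.update u α (u α - 1)) := by
  ext β
  rcases eq_or_ne β α with rfl | h
  · simp
  · simp [h]

theorem Finset.sum_update_sub_one_add_one {σ : Type*} [Fintype σ] [DecidableEq σ] {u : σ → ℕ}
    {α : σ} (h : 1 ≤ u α) : ∑ i, Function.update u α (u α - 1) i + 1 = ∑ i, u i := by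
  rw [sum_update_of_mem (mem_univ α), sum_eq_add_sum_sdiff_singleton_of_mem (mem_univ α) u]
  omega

section Newton

variable {n q : ℕ} (A : Fin q → Matrix (Fin n) (Fin n) ℝ)

theorem gsigma_eq_coeff_det_oneAddPencil (u : Fin q → ℕ) :
    gsigma A u = coeff (Finsupp.equivFunOnFinite.symm u) (oneAddPencil A).det := rfl

theorem adjugate_oneAddPencil_map_coeff_eq_newtonAux (k : ℕ) (u : Fin q → ℕ)
    (hu : ∑ i, u i = k) :
    (oneAddPencil A).adjugate.map (coeff (Finsupp.equivFunOnFinite.symm u)) =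
      newtonAux A k u := by
  induction k generalizing u with
  | zero =>
    have hu : Finsupp.equivFunOnFinite.symm u = 0 :=
      Finsupp.ext fun i => sum_eq_zero_iff.mp hu i (mem_univ i)
    rw [hu, adjugate_oneAddPencil_map_coeff_zero, newtonAux]
  | succ k ih =>
    rw [adjugate_oneAddPencil_map_coeff, newtonAux, gsigma_eq_coeff_det_oneAddPencil]
    simp only [Finsupp.coe_equivFunOnFinite_symm]
    congr 1
    refine sum_congr rfl fun α _ => ite_congr rfl (fun h => ?_) fun _ => rfl
    rw [Finsupp.equivFunOnFinite_symm_sub_single_one,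
      ih _ (by have := sum_update_sub_one_add_one h; omega)]

theorem adjugate_oneAddPencil_map_coeff_eq_newton (u : Fin q → ℕ) :
    (oneAddPencil A).adjugate.map (coeff (Finsupp.equivFunOnFinite.symm u)) = newton A u :=
  adjugate_oneAddPencil_map_coeff_eq_newtonAux A _ u rfl

end Newton

theorem sum_trace_newton {n q : ℕ} (A : Fin q → Matrix (Fin n) (Fin n) ℝ)
    (u : Fin q → ℕ) :
    ((∑ i, u i : ℕ) : ℝ) * gsigma A u =
      ∑ α, if 1 ≤ u α then (A α * newton A (Function.update u α (u α - 1))).trace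
        else 0 := by
  rw [Nat.cast_sum, sum_mul]
  refine sum_congr rfl fun α _ => ?_
  have h := natCast_mul_coeff_det_oneAddPencil A (Finsupp.equivFunOnFinite.symm u) α
  rwa [Finsupp.equivFunOnFinite_symm_sub_single_one,
    adjugate_oneAddPencil_map_coeff_eq_newton] at h
end

section
/- Let A = (A_1,...,A_q) be a family of endomorphisms of an n-dimensional vector space, σ_u its symmetric functions, and T_u the generalized Newton transformation defined by T_0 = I, T_u = σ_u I − Σ_α A_α T_{α♭(u)}. Then tr(T_u) = (n − |u|) σ_u for every multi-index u with |u| ≤ n. -/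
/-!
Let `P(t) = I + ∑ α, t_α A_α` over the polynomial ring in the `t_α`. Comparing the
coefficients of `t^u` in `P · adj P = det P · I` shows that `T_u` is the `t^u`-coefficient of
`adj P`. The Euler derivation `E = ∑ α, t_α ∂_α` maps `P` to `P - I`, so Jacobi's formula gives
`E (det P) = tr (adj P · (P - I)) = n det P - tr (adj P)`. Since `E` multiplies the
`t^u`-coefficient by `|u|`, the `t^u`-coefficient of `tr (adj P)` is `(n - |u|) σ_u`.
-/

open MvPolynomial Matrix

namespace MvPolynomial

variable (σ R : Type*) [CommSemiring R]

noncomputable def eulerDerivation : Derivation R (MvPolynomial σ R) (MvPolynomial σ R) :=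
  mkDerivation R X

variable {σ R}

@[simp]
theorem eulerDerivation_X (i : σ) : eulerDerivation σ R (X i) = X i :=
  mkDerivation_X R X i

theorem eulerDerivation_monomial (s : σ →₀ ℕ) (r : R) :
    eulerDerivation σ R (monomial s r) = s.degree • monomial s r := by
  classical
  rw [eulerDerivation, mkDerivation_monomial, Finsupp.sum, Finsupp.degree_apply, Finset.sum_smul,
    Finset.smul_sum]
  refine Finset.sum_congr rfl fun i hi => ?_
  rw [smul_eq_mul, X, monomial_mul, mul_one, Finsupp.sub_add_single_one_cancel
    (Finsupp.mem_support_iff.mp hi), smul_monomial, smul_monomial, smul_eq_mul, nsmul_eq_mul,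
    mul_comm]

theorem coeff_eulerDerivation (s : σ →₀ ℕ) (p : MvPolynomial σ R) :
    coeff s (eulerDerivation σ R p) = s.degree • coeff s p := by
  classical
  induction p using MvPolynomial.induction_on' with
  | add p q hp hq => simp only [map_add, coeff_add, hp, hq, smul_add]
  | monomial t r =>
    rw [eulerDerivation_monomial, coeff_smul, coeff_monomial]
    split_ifs with h
    · rw [h]
    · rw [smul_zero, smul_zero]

end MvPolynomial

theorem Matrix.det_updateCol_eq_sum {A m : Type*} [CommRing A] [Fintype m] [DecidableEq m]
    (M : Matrix m m A) (i : m) (c : m → A) :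
    (M.updateCol i c).det = ∑ σ : Equiv.Perm m, Equiv.Perm.sign σ •
      ((∏ j ∈ Finset.univ.erase i, M (σ j) j) * c (σ i)) := by
  rw [det_apply]
  refine Finset.sum_congr rfl fun σ _ => ?_
  rw [← Finset.mul_prod_erase _ _ (Finset.mem_univ i), updateCol_self, mul_comm]
  congr 2
  exact Finset.prod_congr rfl fun j hj => updateCol_ne (Finset.ne_of_mem_erase hj)

namespace Derivation

theorem map_prod {R A : Type*} [CommSemiring R] [CommSemiring A] [Algebra R A]
    (D : Derivation R A A) {ι : Type*} [DecidableEq ι] (s : Finset ι) (f : ι → A) :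
    D (∏ i ∈ s, f i) = ∑ i ∈ s, (∏ j ∈ s.erase i, f j) * D (f i) := by
  induction s using Finset.induction with
  | empty => simp
  | @insert a s ha ih =>
    rw [Finset.prod_insert ha, D.leibniz, ih, Finset.sum_insert ha, Finset.erase_insert ha,
      smul_eq_mul, smul_eq_mul, Finset.mul_sum, add_comm]
    congr 1
    refine Finset.sum_congr rfl fun i hi => ?_
    rw [Finset.erase_insert_of_ne (ne_of_mem_of_not_mem hi ha).symm,
      Finset.prod_insert (fun h => ha (Finset.mem_of_mem_erase h))]
    ring

/-- Jacobi's formula. -/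
theorem map_det_s5 {R A : Type*} [CommSemiring R] [CommRing A] [Algebra R A] (D : Derivation R A A)
    {m : Type*} [Fintype m] [DecidableEq m] (M : Matrix m m A) :
    D M.det = trace (M.adjugate * M.map D) := by
  have expand : D M.det = ∑ i, (M.updateCol i fun k => D (M k i)).det := by
    simp only [det_updateCol_eq_sum]
    rw [det_apply, map_sum, Finset.sum_comm]
    simp only [Units.smul_def, map_zsmul, D.map_prod, Finset.smul_sum]
  rw [expand, trace]
  refine Finset.sum_congr rfl fun i _ => ?_
  rw [← cramer_apply, cramer_eq_adjugate_mulVec, diag_apply, mul_apply]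
  rfl

end Derivation

namespace Matrix

section CommSemiring

variable {σ R m : Type*} [CommSemiring R]

theorem trace_map_coeff [Fintype m] (s : σ →₀ ℕ) (M : Matrix m m (MvPolynomial σ R)) :
    trace (M.map (coeff s)) = coeff s (trace M) :=
  (AddMonoidHom.map_trace (coeffAddMonoidHom s) M).symm

theorem map_coeff_X_smul [DecidableEq σ] (s : σ →₀ ℕ) (α : σ)
    (N : Matrix m m (MvPolynomial σ R)) :
    ((X α : MvPolynomial σ R) • N).map (coeff s) =
      if α ∈ s.support then N.map (coeff (s - Finsupp.single α 1)) else 0 := by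
  ext i j
  simp only [map_apply, smul_apply, smul_eq_mul, coeff_X_mul']
  split_ifs <;> rfl

theorem map_coeff_map_C_mul [Fintype m] (s : σ →₀ ℕ) (M : Matrix m m R)
    (N : Matrix m m (MvPolynomial σ R)) : (M.map C * N).map (coeff s) = M * N.map (coeff s) := by
  ext i j
  simp only [map_apply, mul_apply, coeff_sum, coeff_C_mul]

variable [Fintype σ] [DecidableEq m]

noncomputable def pencil (A : σ → Matrix m m R) : Matrix m m (MvPolynomial σ R) :=
  1 + ∑ α, (X α : MvPolynomial σ R) • (A α).map C

theorem pencil_mul [Fintype m] (A : σ → Matrix m m R) (N : Matrix m m (MvPolynomial σ R)) :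
    pencil A * N = N + ∑ α, (X α : MvPolynomial σ R) • ((A α).map C * N) := by
  simp only [pencil, add_mul, one_mul, Finset.sum_mul, smul_mul_assoc]

theorem pencil_map_constantCoeff (A : σ → Matrix m m R) :
    (pencil A).map constantCoeff = 1 := by
  ext i j
  simp [pencil, Matrix.sum_apply, one_apply, apply_ite (constantCoeff (σ := σ) (R := R))]

end CommSemiring

variable {σ R m : Type*} [CommRing R] [Fintype σ] [DecidableEq m]

theorem pencil_map_eulerDerivation (A : σ → Matrix m m R) :
    (pencil A).map (eulerDerivation σ R) = pencil A - 1 := by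
  ext i j : 2
  simp [pencil, Matrix.sum_apply, one_apply, apply_ite (eulerDerivation σ R), Derivation.leibniz,
    mul_comm]

variable [Fintype m]

theorem trace_adjugate_pencil (A : σ → Matrix m m R) :
    trace (adjugate (pencil A)) =
      Fintype.card m • det (pencil A) - eulerDerivation σ R (det (pencil A)) := by
  rw [Derivation.map_det_s5, pencil_map_eulerDerivation, Matrix.mul_sub, mul_one, trace_sub,
    adjugate_mul, trace_smul, trace_one, smul_eq_mul, nsmul_eq_mul, mul_comm, sub_sub_cancel]

theorem coeff_trace_adjugate_pencil (A : σ → Matrix m m R) (s : σ →₀ ℕ) :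
    coeff s (trace (adjugate (pencil A))) =
      ((Fintype.card m : R) - s.degree) * coeff s (det (pencil A)) := by
  rw [trace_adjugate_pencil, coeff_sub, coeff_smul, coeff_eulerDerivation, sub_mul,
    nsmul_eq_mul, nsmul_eq_mul]

theorem map_coeff_zero_adjugate_pencil (A : σ → Matrix m m R) :
    (adjugate (pencil A)).map (coeff 0) = 1 := by
  change (constantCoeff (σ := σ) (R := R)).mapMatrix (adjugate (pencil A)) = 1
  rw [RingHom.map_adjugate, RingHom.mapMatrix_apply, pencil_map_constantCoeff, adjugate_one]

theorem map_coeff_adjugate_pencil [DecidableEq σ] (A : σ → Matrix m m R) (s : σ →₀ ℕ) :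
    (adjugate (pencil A)).map (coeff s) = coeff s (det (pencil A)) • 1 -
      ∑ α, if α ∈ s.support then A α * (adjugate (pencil A)).map (coeff (s - Finsupp.single α 1))
        else 0 := by
  have h := congrArg (coeffAddMonoidHom s).mapMatrix (mul_adjugate (pencil A))
  have coe_coeffAddMonoidHom : ⇑(coeffAddMonoidHom s : MvPolynomial σ R →+ R) = coeff s := rfl
  have map_smul_one (p : MvPolynomial σ R) :
      (p • (1 : Matrix m m (MvPolynomial σ R))).map (coeff s) = coeff s p • 1 := by
    ext i j
    by_cases hij : i = j <;> simp [hij]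
  simp only [pencil_mul, map_add, map_sum, AddMonoidHom.mapMatrix_apply, coe_coeffAddMonoidHom,
    map_coeff_X_smul, map_coeff_map_C_mul, map_smul_one] at h
  exact eq_sub_of_add_eq h

end Matrix

theorem Finsupp.equivFunOnFinite_symm_update_sub_one {ι : Type*} [Finite ι] [DecidableEq ι]
    (u : ι → ℕ) (α : ι) :
    equivFunOnFinite.symm (Function.update u α (u α - 1)) =
      equivFunOnFinite.symm u - single α 1 := by
  ext β
  rcases eq_or_ne β α with rfl | h <;> simp [*]

theorem newtonAux_eq_map_coeff_adjugate_pencil {n q : ℕ} (A : Fin q → Matrix (Fin n) (Fin n) ℝ)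
    (k : ℕ) (u : Fin q → ℕ) (hk : ∑ i, u i = k) :
    newtonAux A k u = (adjugate (pencil A)).map (coeff (Finsupp.equivFunOnFinite.symm u)) := by
  induction k generalizing u with
  | zero =>
    obtain rfl : u = 0 := funext fun i => Finset.sum_eq_zero_iff.mp hk i (Finset.mem_univ i)
    rw [newtonAux, show Finsupp.equivFunOnFinite.symm 0 = 0 from
      Finsupp.equivFunOnFinite.symm_apply_eq.mpr rfl, map_coeff_zero_adjugate_pencil]
  | succ k ih =>
    rw [newtonAux, map_coeff_adjugate_pencil]
    congr 2
    funext α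
    simp only [Finsupp.mem_support_iff, Finsupp.coe_equivFunOnFinite_symm]
    by_cases hα : u α = 0
    · simp [hα]
    have hsum : ∑ i, Function.update u α (u α - 1) i = k := by
      rw [Finset.sum_update_of_mem (Finset.mem_univ α), Finset.sdiff_singleton_eq_erase]
      have := Finset.add_sum_erase _ u (Finset.mem_univ α)
      omega
    rw [if_pos (Nat.one_le_iff_ne_zero.mpr hα), if_pos hα, ih _ hsum,
      Finsupp.equivFunOnFinite_symm_update_sub_one]

theorem trace_newton_general {n q : ℕ} (A : Fin q → Matrix (Fin n) (Fin n) ℝ)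
    (u : Fin q → ℕ) :
    (newton A u).trace = ((n : ℝ) - ((∑ i, u i : ℕ) : ℝ)) * gsigma A u := by
  rw [newton, newtonAux_eq_map_coeff_adjugate_pencil A _ u rfl, trace_map_coeff,
    coeff_trace_adjugate_pencil, Fintype.card_fin, Finsupp.degree_eq_sum,
    Finsupp.coe_equivFunOnFinite_symm]
  rfl

theorem trace_newton {n q : ℕ} (A : Fin q → Matrix (Fin n) (Fin n) ℝ)
    (u : Fin q → ℕ) (hu : ∑ i, u i ≤ n) :
    (newton A u).trace = ((n : ℝ) - ((∑ i, u i : ℕ) : ℝ)) * gsigma A u :=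
  trace_newton_general A u
end
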